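/- Conversely, let F = F_1 + F_2·j be a unitary p×p quaternion matrix with F_1, F_2 complex. If for every real circulant p×p matrix Â all eight matrices F_1·Â·F_1*, F_1·Â·F_1^T, F_1·Â·F_2^T, F_1·Â·F_2*, F_2·Â·F_1*, F_2·Â·F_1^T, F_2·Â·F_2^T, F_2·Â·F_2* are diagonal, then F·A·F* is diagonal for every circulant quaternion matrix A of size p×p. -/

import Mathlib

/-!
Write a circulant quaternion matrix as `A = A₁ + A₂·j` with `A₁`, `A₂` complex circulant.
The Cayley–Dickson expansion of `F·A·F*` writes both complex components of the product as signed
sums of the eight products `F_a·B·F_b*`, `F_a·B·F_bᵀ` with `B` one of `A₁`, `A₂`, `conj A₁`,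
`conj A₂`, each again complex circulant. A complex circulant matrix is `R + i·S` with `R`, `S` real
circulant, so all eight products are diagonal by hypothesis, hence so is `F·A·F*`.
-/

open Matrix Quaternion

noncomputable def cq (z : ℂ) : ℍ[ℝ] := ⟨z.re, z.im, 0, 0⟩

noncomputable def qj : ℍ[ℝ] := ⟨0, 0, 1, 0⟩

@[simp] lemma cq_re (z : ℂ) : (cq z).re = z.re := rfl
@[simp] lemma cq_imI (z : ℂ) : (cq z).imI = z.im := rfl
@[simp] lemma cq_imJ (z : ℂ) : (cq z).imJ = 0 := rfl
@[simp] lemma cq_imK (z : ℂ) : (cq z).imK = 0 := rfl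
@[simp] lemma qj_re : qj.re = 0 := rfl
@[simp] lemma qj_imI : qj.imI = 0 := rfl
@[simp] lemma qj_imJ : qj.imJ = 1 := rfl
@[simp] lemma qj_imK : qj.imK = 0 := rfl

@[simp] lemma cq_zero : cq 0 = 0 := by ext <;> simp

lemma cq_add (a b : ℂ) : cq (a + b) = cq a + cq b := by ext <;> simp

lemma cq_sum {ι : Type*} (s : Finset ι) (f : ι → ℂ) : cq (∑ x ∈ s, f x) = ∑ x ∈ s, cq (f x) :=
  map_sum (AddMonoidHom.mk' cq cq_add) f s

lemma cq_add_cq_mul_qj (q : ℍ[ℝ]) : cq ⟨q.re, q.imI⟩ + cq ⟨q.imJ, q.imK⟩ * qj = q := by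
  ext <;> simp [re_mul, imI_mul, imJ_mul, imK_mul]

lemma cq_mul_mul_star (a b c d a' b' : ℂ) :
    (cq a + cq b * qj) * (cq c + cq d * qj) * star (cq a' + cq b' * qj) =
      cq ((a * c - b * star d) * star a' + (a * d + b * star c) * star b') +
        cq ((a * d + b * star c) * a' - (a * c - b * star d) * b') * qj := by
  ext <;> simp [re_mul, imI_mul, imJ_mul, imK_mul] <;> ring

namespace Matrix

variable {l m n : Type*}

noncomputable def cayleyDickson (M N : Matrix l m ℂ) : Matrix l m ℍ[ℝ] :=
  of fun s t => cq (M s t) + cq (N s t) * qj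

lemma cayleyDickson_mul_mul_conjTranspose [Fintype m] (F₁ F₂ : Matrix l m ℂ)
    (A₁ A₂ : Matrix m m ℂ) :
    cayleyDickson F₁ F₂ * cayleyDickson A₁ A₂ * (cayleyDickson F₁ F₂)ᴴ =
      cayleyDickson
        (F₁ * A₁ * F₁ᴴ - F₂ * A₂.map star * F₁ᴴ + F₂ * A₁.map star * F₂ᴴ + F₁ * A₂ * F₂ᴴ)
        (F₁ * A₂ * F₁ᵀ + F₂ * A₁.map star * F₁ᵀ - F₁ * A₁ * F₂ᵀ + F₂ * A₂.map star * F₂ᵀ) := by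
  ext i k : 1
  simp only [cayleyDickson, mul_apply, conjTranspose_apply, transpose_apply, map_apply, of_apply,
    add_apply, sub_apply, Finset.sum_mul, cq_mul_mul_star, ← Finset.sum_add_distrib,
    ← Finset.sum_sub_distrib, cq_sum]
  exact Finset.sum_congr rfl fun _ _ => Finset.sum_congr rfl fun _ _ =>
    congr_arg₂ (fun a b => cq a + cq b * qj) (by ring) (by ring)

lemma IsDiag.cayleyDickson {M N : Matrix l l ℂ} (hM : M.IsDiag) (hN : N.IsDiag) :
    (cayleyDickson M N).IsDiag := fun i k hik => by
  simp [Matrix.cayleyDickson, hM hik, hN hik]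

lemma circulant_eq_ofReal_add_I_smul [Sub n] (w : n → ℂ) :
    circulant w = (circulant fun x => (w x).re).map (fun r => (r : ℂ)) +
      Complex.I • (circulant fun x => (w x).im).map (fun r => (r : ℂ)) := by
  ext s t
  simp [Complex.ext_iff]

lemma isDiag_mul_circulant_mul_of_real [Fintype n] [Sub n] {G : Matrix l n ℂ} {H : Matrix n l ℂ}
    (h : ∀ r : n → ℝ, (G * (circulant r).map (fun x => (x : ℂ)) * H).IsDiag) (w : n → ℂ) :
    (G * circulant w * H).IsDiag := by
  rw [circulant_eq_ofReal_add_I_smul, Matrix.mul_add, Matrix.add_mul, Matrix.mul_smul,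
    Matrix.smul_mul]
  exact (h _).add ((h _).smul _)

end Matrix

theorem stmt19_general (p : ℕ)
    (F1 F2 : Matrix (Fin p) (Fin p) ℂ)
    (F : Matrix (Fin p) (Fin p) ℍ[ℝ])
    (hF : ∀ s t, F s t = cq (F1 s t) + cq (F2 s t) * qj)
    (height : ∀ Ahat : Matrix (Fin p) (Fin p) ℝ, (∃ v, Ahat = Matrix.circulant v) →
      ((F1 * Ahat.map (fun r => (r : ℂ)) * F1ᴴ).IsDiag ∧
       (F1 * Ahat.map (fun r => (r : ℂ)) * F1ᵀ).IsDiag ∧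
       (F1 * Ahat.map (fun r => (r : ℂ)) * F2ᵀ).IsDiag ∧
       (F1 * Ahat.map (fun r => (r : ℂ)) * F2ᴴ).IsDiag ∧
       (F2 * Ahat.map (fun r => (r : ℂ)) * F1ᴴ).IsDiag ∧
       (F2 * Ahat.map (fun r => (r : ℂ)) * F1ᵀ).IsDiag ∧
       (F2 * Ahat.map (fun r => (r : ℂ)) * F2ᵀ).IsDiag ∧
       (F2 * Ahat.map (fun r => (r : ℂ)) * F2ᴴ).IsDiag)) :
    ∀ A : Matrix (Fin p) (Fin p) ℍ[ℝ],
      (∃ v, A = Matrix.circulant v) → (F * A * Fᴴ).IsDiag := by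
  rintro A ⟨v, rfl⟩
  have h (r : Fin p → ℝ) := height (circulant r) ⟨r, rfl⟩
  simp only [forall_and] at h
  obtain ⟨h11H, h11T, h12T, h12H, h21H, h21T, h22T, h22H⟩ := h
  have hF' : F = cayleyDickson F1 F2 := ext hF
  have hv : circulant v = cayleyDickson (circulant fun x => ⟨(v x).re, (v x).imI⟩)
      (circulant fun x => ⟨(v x).imJ, (v x).imK⟩) :=
    ext fun _ _ => (cq_add_cq_mul_qj _).symm
  rw [hF', hv, cayleyDickson_mul_mul_conjTranspose, map_circulant, map_circulant]
  have lem := @isDiag_mul_circulant_mul_of_real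
  exact .cayleyDickson
    ((((lem h11H _).sub (lem h21H _)).add (lem h22H _)).add (lem h12H _))
    ((((lem h11T _).add (lem h21T _)).sub (lem h12T _)).add (lem h22T _))

/-- Sufficiency: let `F = F₁ + F₂·j` be a unitary quaternion matrix.  If for
every real circulant `Â` all eight matrices `F₁·Â·F₁*`, `F₁·Â·F₁ᵀ`,
`F₁·Â·F₂ᵀ`, `F₁·Â·F₂*`, `F₂·Â·F₁*`, `F₂·Â·F₁ᵀ`, `F₂·Â·F₂ᵀ`, `F₂·Â·F₂*` are
diagonal, then `F·A·F*` is diagonal for every circulant quaternion `A`. -/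
theorem stmt19 (p : ℕ) (hp : 0 < p)
    (F1 F2 : Matrix (Fin p) (Fin p) ℂ)
    (F : Matrix (Fin p) (Fin p) ℍ[ℝ])
    (hF : ∀ s t, F s t = cq (F1 s t) + cq (F2 s t) * qj)
    (hunitary : F * Fᴴ = 1 ∧ Fᴴ * F = 1)
    (height : ∀ Ahat : Matrix (Fin p) (Fin p) ℝ, (∃ v, Ahat = Matrix.circulant v) →
      ((F1 * Ahat.map (fun r => (r : ℂ)) * F1ᴴ).IsDiag ∧
       (F1 * Ahat.map (fun r => (r : ℂ)) * F1ᵀ).IsDiag ∧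
       (F1 * Ahat.map (fun r => (r : ℂ)) * F2ᵀ).IsDiag ∧
       (F1 * Ahat.map (fun r => (r : ℂ)) * F2ᴴ).IsDiag ∧
       (F2 * Ahat.map (fun r => (r : ℂ)) * F1ᴴ).IsDiag ∧
       (F2 * Ahat.map (fun r => (r : ℂ)) * F1ᵀ).IsDiag ∧
       (F2 * Ahat.map (fun r => (r : ℂ)) * F2ᵀ).IsDiag ∧
       (F2 * Ahat.map (fun r => (r : ℂ)) * F2ᴴ).IsDiag)) :
    ∀ A : Matrix (Fin p) (Fin p) ℍ[ℝ],
      (∃ v, A = Matrix.circulant v) → (F * A * Fᴴ).IsDiag :=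
  stmt19_general p F1 F2 F hF height
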